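/- arXiv:1707.08735 — 9 statements merged into one kernel-verified Lean document; each statement's English description precedes it below -/
import Mathlib

section
/- Let M = ⟨W, {R_a}_{a∈Ag}, V⟩ be a Kripke model (each R_a an equivalence relation on W), w ∈ W a world, ψ a GLAL formula, and A ⊆ Ag a coalition. Then for every agent a ∈ Ag, the relation R⁻_a of the refinement M⁻_(w,ψ,A) and the relation R⁺_a of the refinement M⁺_(w,ψ,A) are equivalence relations on W. -/
/-- Formulas of GLAL: atoms, negation, conjunction, common knowledge `C_A`,
global announcement `[φ]⁺_A ψ` (`annP`) and local announcement `[φ]⁻_A ψ` (`annM`). -/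
inductive Form (AP Ag : Type) : Type
  | atom : AP → Form AP Ag
  | neg  : Form AP Ag → Form AP Ag
  | and  : Form AP Ag → Form AP Ag → Form AP Ag
  | ck   : Set Ag → Form AP Ag → Form AP Ag
  | annP : Form AP Ag → Set Ag → Form AP Ag → Form AP Ag
  | annM : Form AP Ag → Set Ag → Form AP Ag → Form AP Ag

/-- A Kripke model over worlds `W`: a relation for each agent and a valuation.
(The requirement that each relation is an equivalence relation is stated
separately, as a hypothesis, where needed.) -/
structure KModel (AP Ag W : Type) where
  R : Ag → W → W → Prop
  V : AP → Set W

variable {AP Ag : Type}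

/-- `R^C_A`: the reflexive-transitive closure of the union of the relations
of the agents in `A`. -/
def ckRel {W : Type} (M : KModel AP Ag W) (A : Set Ag) : W → W → Prop :=
  Relation.ReflTransGen (fun v u => ∃ a ∈ A, M.R a v u)

/-- The local refinement `M⁻_(w,X,A)` of `M` w.r.t. world `w`, a set `X` of worlds
(the satisfaction set of the announced formula) and coalition `A`:
for `a ∉ A` the relation is unchanged; for `a ∈ A`, if `v ∈ R_a(w)` then the
equivalence class of `v` is split according to membership in `X`. -/
def KModel.refM {W : Type} (M : KModel AP Ag W) (w : W) (X : Set W) (A : Set Ag) :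
    KModel AP Ag W where
  R a v u := M.R a v u ∧ (a ∈ A → M.R a w v → (v ∈ X ↔ u ∈ X))
  V := M.V

/-- The global refinement `M⁺_(w,X,A)`: as the local one, but with test set
`R^C_A(w)` instead of `R_a(w)`. -/
def KModel.refP {W : Type} (M : KModel AP Ag W) (w : W) (X : Set W) (A : Set Ag) :
    KModel AP Ag W where
  R a v u := M.R a v u ∧ (a ∈ A → ckRel M A w v → (v ∈ X ↔ u ∈ X))
  V := M.V

/-- GLAL satisfaction `(M,w) ⊨ φ`. -/
def sat {W : Type} : Form AP Ag → KModel AP Ag W → W → Prop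
  | .atom p, M, w => w ∈ M.V p
  | .neg φ, M, w => ¬ sat φ M w
  | .and φ ψ, M, w => sat φ M w ∧ sat ψ M w
  | .ck A φ, M, w => ∀ v, ckRel M A w v → sat φ M v
  | .annM φ A ψ, M, w => sat φ M w → sat ψ (M.refM w {v | sat φ M v} A) w
  | .annP φ A ψ, M, w => sat φ M w → sat ψ (M.refP w {v | sat φ M v} A) w

/-- Validity: truth at every world of every Kripke model (all of whose
relations are equivalence relations). -/
def Valid (φ : Form AP Ag) : Prop :=
  ∀ (W : Type) (M : KModel AP Ag W), (∀ a, Equivalence (M.R a)) → ∀ w : W, sat φ M w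

/-- `φ → ψ` as the usual abbreviation `¬(φ ∧ ¬ψ)`. -/
def Form.impl (φ ψ : Form AP Ag) : Form AP Ag := .neg (.and φ (.neg ψ))

/-- `φ ↔ ψ` as the usual abbreviation. -/
def Form.biimpl (φ ψ : Form AP Ag) : Form AP Ag := .and (φ.impl ψ) (ψ.impl φ)

/-! Both refinements intersect `R_a` with "same side of the announced set", but only on a test set
(`R_a(w)`, resp. `R^C_A(w)`) that is a union of `R_a`-classes; so they split some classes in two and
leave the others alone. -/

theorem Equivalence.and_imp_mem_iff {W : Type} {r : W → W → Prop} (hr : Equivalence r)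
    {p : Prop} {T : W → Prop} (hT : p → ∀ {v u}, r v u → T v → T u) (X : Set W) :
    Equivalence fun v u => r v u ∧ (p → T v → (v ∈ X ↔ u ∈ X)) where
  refl v := ⟨hr.refl v, fun _ _ => Iff.rfl⟩
  symm := fun ⟨hvu, hsplit⟩ =>
    ⟨hr.symm hvu, fun hp hu => (hsplit hp (hT hp (hr.symm hvu) hu)).symm⟩
  trans := fun ⟨hvu, hsplit⟩ ⟨huz, hsplit'⟩ =>
    ⟨hr.trans hvu huz, fun hp hv => (hsplit hp hv).trans (hsplit' hp (hT hp hvu hv))⟩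

theorem ckRel.tail_of_mem {W : Type} {M : KModel AP Ag W} {A : Set Ag} {a : Ag} {w v u : W}
    (hwv : ckRel M A w v) (ha : a ∈ A) (hvu : M.R a v u) : ckRel M A w u :=
  Relation.ReflTransGen.tail hwv ⟨a, ha, hvu⟩

theorem refinement_equivalence_general {W : Type}
    (M : KModel AP Ag W) (hM : ∀ a : Ag, Equivalence (M.R a))
    (w : W) (ψ : Form AP Ag) (A : Set Ag) :
    ∀ a : Ag,
      Equivalence ((M.refM w {v | sat ψ M v} A).R a) ∧
      Equivalence ((M.refP w {v | sat ψ M v} A).R a) := by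
  intro a
  exact ⟨(hM a).and_imp_mem_iff (fun _ _ _ hvu hwv => (hM a).trans hwv hvu) _,
    (hM a).and_imp_mem_iff (fun ha _ _ hvu hwv => hwv.tail_of_mem ha hvu) _⟩

/-- Both refined relations of `M⁻_(w,ψ,A)` and `M⁺_(w,ψ,A)`
are equivalence relations, provided all relations of `M` are. -/
theorem refinement_equivalence {W : Type} [Fintype Ag]
    (M : KModel AP Ag W) (hM : ∀ a : Ag, Equivalence (M.R a))
    (w : W) (ψ : Form AP Ag) (A : Set Ag) :
    ∀ a : Ag,
      Equivalence ((M.refM w {v | sat ψ M v} A).R a) ∧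
      Equivalence ((M.refP w {v | sat ψ M v} A).R a) :=
  refinement_equivalence_general M hM w ψ A
end

section
/- For every PAL formula ψ, every Kripke model M, and every world w of M: (M,w) ⊨_PAL ψ if and only if (M,w) ⊨_GLAL tr(ψ), where tr is the translation from PAL into GLAL that commutes with atoms, negation, conjunction, and common knowledge operators, and maps tr([φ]φ') = [tr(φ)]⁺_Ag tr(φ'). -/
variable {AP Ag : Type}

/-- Formulas of PAL: atoms, negation, conjunction, common knowledge,
and public announcement `[φ]ψ`. -/
inductive PForm (AP Ag : Type) : Type
  | atom : AP → PForm AP Ag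
  | neg  : PForm AP Ag → PForm AP Ag
  | and  : PForm AP Ag → PForm AP Ag → PForm AP Ag
  | ck   : Set Ag → PForm AP Ag → PForm AP Ag
  | ann  : PForm AP Ag → PForm AP Ag → PForm AP Ag

/-- The restriction `M_X` of a model to a set `X` of worlds: worlds `W ∩ X`,
relations `R_a ∩ (X × X)` and valuation `V(p) ∩ X`. -/
def KModel.restrict {W : Type} (M : KModel AP Ag W) (X : Set W) :
    KModel AP Ag {v : W // v ∈ X} where
  R a v u := M.R a v.1 u.1
  V p := {v | v.1 ∈ M.V p}

/-- PAL satisfaction `(M,w) ⊨_PAL φ`. -/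
def psat : PForm AP Ag → {W : Type} → KModel AP Ag W → W → Prop
  | .atom p, _, M, w => w ∈ M.V p
  | .neg φ, _, M, w => ¬ psat φ M w
  | .and φ ψ, _, M, w => psat φ M w ∧ psat ψ M w
  | .ck A φ, _, M, w => ∀ v, ckRel M A w v → psat φ M v
  | .ann φ ψ, _, M, w => ∀ h : psat φ M w, psat ψ (M.restrict {v | psat φ M v}) ⟨w, h⟩

/-- The translation from PAL into GLAL: it commutes with atoms, negation,
conjunction and common knowledge, and maps `[φ]ψ` to `[tr φ]⁺_Ag (tr ψ)`. -/
def tr : PForm AP Ag → Form AP Ag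
  | .atom p => .atom p
  | .neg φ => .neg (tr φ)
  | .and φ ψ => .and (tr φ) (tr ψ)
  | .ck A φ => .ck A (tr φ)
  | .ann φ ψ => .annP (tr φ) Set.univ (tr ψ)

/-!
A PAL announcement deletes the worlds where the announcement fails, while the global refinement
`M⁺_(w,X,Ag)` keeps them but cuts every edge inside the `Ag`-component of `w` that crosses the
boundary of `X`. So the restricted model embeds into the refined one, and the image of the
embedding is closed under the successors of the worlds reachable from `w`. Truth of translated
formulas is preserved along any such "component-closed" embedding, which is proved by induction
on the PAL formula: the announcement case reduces to the same situation one level down.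
-/

section Embedding

variable {W₀ W : Type}

lemma ckRel_mono {M M' : KModel AP Ag W} {A B : Set Ag} (hA : A ⊆ B)
    (hR : ∀ a v u, M.R a v u → M'.R a v u) {v u : W} (h : ckRel M A v u) : ckRel M' B v u :=
  Relation.ReflTransGen.mono (fun _ _ ⟨a, ha, h⟩ => ⟨a, hA ha, hR a _ _ h⟩) v u h

lemma ckRel_univ {M : KModel AP Ag W} {A : Set Ag} {v u : W} (h : ckRel M A v u) :
    ckRel M Set.univ v u :=
  ckRel_mono (Set.subset_univ A) (fun _ _ _ h => h) h

lemma ckRel_refP {M : KModel AP Ag W} {w : W} {X : Set W} {A B : Set Ag} {v u : W}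
    (h : ckRel (M.refP w X A) B v u) : ckRel M B v u :=
  ckRel_mono subset_rfl (fun _ _ _ (h : (M.refP w X A).R _ _ _) => h.1) h

structure KModel.IsStrongHom (K : KModel AP Ag W₀) (N : KModel AP Ag W) (f : W₀ → W) :
    Prop where
  mem_V_iff : ∀ p x, x ∈ K.V p ↔ f x ∈ N.V p
  R_iff : ∀ a x y, K.R a x y ↔ N.R a (f x) (f y)

def RangeClosedFrom (N : KModel AP Ag W) (f : W₀ → W) (w : W) : Prop :=
  ∀ a x u, ckRel N Set.univ w (f x) → N.R a (f x) u → u ∈ Set.range f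

lemma KModel.isStrongHom_id (M : KModel AP Ag W) : M.IsStrongHom M id :=
  ⟨fun _ _ => Iff.rfl, fun _ _ _ => Iff.rfl⟩

lemma rangeClosedFrom_id (M : KModel AP Ag W) (w : W) : RangeClosedFrom M id w :=
  fun _ _ u _ _ => ⟨u, rfl⟩

variable {K : KModel AP Ag W₀} {N : KModel AP Ag W} {f : W₀ → W}

lemma KModel.IsStrongHom.ckRel_map (hf : K.IsStrongHom N f) {A : Set Ag} {v u : W₀}
    (h : ckRel K A v u) : ckRel N A (f v) (f u) := by
  induction h with
  | refl => exact Relation.ReflTransGen.refl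
  | tail _ hstep ih =>
    obtain ⟨a, ha, hs⟩ := hstep
    exact ih.tail ⟨a, ha, (hf.R_iff a _ _).1 hs⟩

lemma RangeClosedFrom.of_ckRel {w w' : W} (hc : RangeClosedFrom N f w)
    (h : ckRel N Set.univ w w') : RangeClosedFrom N f w' :=
  fun a x u hx hu => hc a x u (h.trans hx) hu

lemma RangeClosedFrom.exists_ckRel (hf : K.IsStrongHom N f) {v : W₀}
    (hc : RangeClosedFrom N f (f v)) {A : Set Ag} {u : W} (h : ckRel N A (f v) u) :
    ∃ u', f u' = u ∧ ckRel K A v u' := by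
  induction h with
  | refl => exact ⟨v, rfl, Relation.ReflTransGen.refl⟩
  | tail hsteps hstep ih =>
    obtain ⟨m, rfl, hm⟩ := ih
    obtain ⟨a, ha, hNa⟩ := hstep
    obtain ⟨u', rfl⟩ := hc a m _ (ckRel_univ hsteps) hNa
    exact ⟨u', rfl, hm.tail ⟨a, ha, (hf.R_iff a m u').2 hNa⟩⟩

section Announcement

variable {w : W} {Y : Set W₀} {Z : Set W}

lemma KModel.IsStrongHom.restrict_refP (hf : K.IsStrongHom N f)
    (hYZ : ∀ x, ckRel N Set.univ w (f x) → (x ∈ Y ↔ f x ∈ Z)) :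
    (K.restrict Y).IsStrongHom (N.refP w Z Set.univ) (fun x => f x.1) where
  mem_V_iff p x := hf.mem_V_iff p x.1
  R_iff a x y := by
    refine ⟨fun h => ⟨(hf.R_iff a _ _).1 h, fun _ hx => ?_⟩, fun h => (hf.R_iff a _ _).2 h.1⟩
    have hy : ckRel N Set.univ w (f y.1) := hx.tail ⟨a, trivial, (hf.R_iff a _ _).1 h⟩
    exact iff_of_true ((hYZ x.1 hx).1 x.2) ((hYZ y.1 hy).1 y.2)

lemma RangeClosedFrom.restrict_refP (hc : RangeClosedFrom N f w)
    (hYZ : ∀ x, ckRel N Set.univ w (f x) → (x ∈ Y ↔ f x ∈ Z)) :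
    RangeClosedFrom (N.refP w Z Set.univ) (fun x : Y => f x.1) w := by
  intro a x u hx hu
  have hxN := ckRel_refP hx
  obtain ⟨u', rfl⟩ := hc a x.1 u hxN hu.1
  -- the surviving edge from `f x` stays on the `Z`-side of the cut, hence lands in `f '' Y`
  have hu'Z : f u' ∈ Z := (hu.2 trivial hxN).1 ((hYZ x.1 hxN).1 x.2)
  have hu'Y : u' ∈ Y := (hYZ u' (hxN.tail ⟨a, trivial, hu.1⟩)).2 hu'Z
  exact ⟨⟨u', hu'Y⟩, rfl⟩

end Announcement

theorem psat_iff_sat_tr_of_isStrongHom (χ : PForm AP Ag) (hf : K.IsStrongHom N f) {v : W₀}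
    (hc : RangeClosedFrom N f (f v)) : psat χ K v ↔ sat (tr χ) N (f v) := by
  induction χ generalizing W₀ W K N f v with
  | atom p => exact hf.mem_V_iff p v
  | neg φ ih => exact not_congr (ih hf hc)
  | and φ ψ ihφ ihψ => exact and_congr (ihφ hf hc) (ihψ hf hc)
  | ck A φ ih =>
    have ih' : ∀ u, ckRel K A v u → (psat φ K u ↔ sat (tr φ) N (f u)) := fun u hu =>
      ih hf (hc.of_ckRel (ckRel_univ (hf.ckRel_map hu)))
    simp only [psat, tr, sat]
    constructor
    · intro h u hu
      obtain ⟨u', rfl, hu'⟩ := hc.exists_ckRel hf hu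
      exact (ih' u' hu').1 (h u' hu')
    · intro h u hu
      exact (ih' u hu).2 (h _ (hf.ckRel_map hu))
  | ann φ ψ ihφ ihψ =>
    have hφ : ∀ x, ckRel N Set.univ (f v) (f x) → (psat φ K x ↔ sat (tr φ) N (f x)) :=
      fun x hx => ihφ hf (hc.of_ckRel hx)
    have ihψ' := fun (hv : psat φ K v) =>
      ihψ (hf.restrict_refP hφ) (v := ⟨v, hv⟩) (hc.restrict_refP hφ)
    have hφv := hφ v Relation.ReflTransGen.refl
    simp only [psat, tr, sat]
    exact ⟨fun H hv => (ihψ' (hφv.2 hv)).1 (H _), fun H hv => (ihψ' hv).2 (H (hφv.1 hv))⟩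

end Embedding

theorem pal_embedding_general (ψ : PForm AP Ag) :
    ∀ (W : Type) (M : KModel AP Ag W), (∀ a : Ag, Equivalence (M.R a)) →
      ∀ w : W, psat ψ M w ↔ sat (tr ψ) M w :=
  fun _ M _ w => psat_iff_sat_tr_of_isStrongHom ψ M.isStrongHom_id (rangeClosedFrom_id M w)

/-- the translation `tr` embeds PAL into GLAL. -/
theorem pal_embedding [Fintype Ag] (ψ : PForm AP Ag) :
    ∀ (W : Type) (M : KModel AP Ag W), (∀ a : Ag, Equivalence (M.R a)) →
      ∀ w : W, psat ψ M w ↔ sat (tr ψ) M w :=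
  pal_embedding_general ψ
end

section
/- For all PAL formulas φ and ψ, every Kripke model M, and every world w of M: (M,w) ⊨_GLAL [tr(φ)]⁺_Ag tr(ψ) if and only if (M,w) ⊨_PAL [φ]ψ, where tr is the translation from PAL into GLAL that commutes with atoms, negation, conjunction, and common knowledge operators, and maps tr([φ]φ') = [tr(φ)]⁺_Ag tr(φ'). That is, the public announcement of PAL coincides with the global announcement to the grand coalition Ag in GLAL. -/
variable {AP Ag : Type}

/-! Within the common-knowledge component of `w`, the global refinement `M⁺_(w,⟦φ⟧,Ag)` cuts
exactly the links between `⟦φ⟧` and its complement. Hence that component, related to itself by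
the identity, is bisimilar to the restriction `M_φ`, and PAL formulas are invariant under
bisimulation; induction on the formula then identifies `tr` with PAL semantics. -/

namespace KModel

structure Bisim {W₁ W₂ : Type} (M₁ : KModel AP Ag W₁) (M₂ : KModel AP Ag W₂)
    (Z : W₁ → W₂ → Prop) : Prop where
  val_iff : ∀ {x y}, Z x y → ∀ p, x ∈ M₁.V p ↔ y ∈ M₂.V p
  forth : ∀ {x y}, Z x y → ∀ a x', M₁.R a x x' → ∃ y', M₂.R a y y' ∧ Z x' y'
  back : ∀ {x y}, Z x y → ∀ a y', M₂.R a y y' → ∃ x', M₁.R a x x' ∧ Z x' y'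

namespace Bisim

variable {W₁ W₂ : Type} {M₁ : KModel AP Ag W₁} {M₂ : KModel AP Ag W₂}
  {Z : W₁ → W₂ → Prop}

theorem symm (hZ : M₁.Bisim M₂ Z) : M₂.Bisim M₁ (flip Z) where
  val_iff h p := (hZ.val_iff h p).symm
  forth h a y' hy := hZ.back h a y' hy
  back h a x' hx := hZ.forth h a x' hx

theorem ckRel_forth (hZ : M₁.Bisim M₂ Z) {A : Set Ag} {x x' : W₁} {y : W₂} (hxy : Z x y)
    (h : ckRel M₁ A x x') : ∃ y', ckRel M₂ A y y' ∧ Z x' y' := by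
  induction h with
  | refl => exact ⟨y, .refl, hxy⟩
  | tail _ hstep ih =>
    obtain ⟨y₁, hy₁, hZ₁⟩ := ih
    obtain ⟨a, ha, hR⟩ := hstep
    obtain ⟨y₂, hR₂, hZ₂⟩ := hZ.forth hZ₁ a _ hR
    exact ⟨y₂, hy₁.tail ⟨a, ha, hR₂⟩, hZ₂⟩

theorem ckRel_back (hZ : M₁.Bisim M₂ Z) {A : Set Ag} {x : W₁} {y y' : W₂} (hxy : Z x y)
    (h : ckRel M₂ A y y') : ∃ x', ckRel M₁ A x x' ∧ Z x' y' :=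
  hZ.symm.ckRel_forth hxy h

theorem restrict (hZ : M₁.Bisim M₂ Z) {X₁ : Set W₁} {X₂ : Set W₂}
    (hX : ∀ {x y}, Z x y → (x ∈ X₁ ↔ y ∈ X₂)) :
    (M₁.restrict X₁).Bisim (M₂.restrict X₂) (fun x y => Z x.1 y.1) where
  val_iff h p := hZ.val_iff h p
  forth {x _} h a x' hx := by
    obtain ⟨y', hR, hZ'⟩ := hZ.forth h a x'.1 hx
    exact ⟨⟨y', (hX hZ').1 x'.2⟩, hR, hZ'⟩
  back {_ y} h a y' hy := by
    obtain ⟨x', hR, hZ'⟩ := hZ.back h a y'.1 hy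
    exact ⟨⟨x', (hX hZ').2 y'.2⟩, hR, hZ'⟩

theorem psat_iff (hZ : M₁.Bisim M₂ Z) (χ : PForm AP Ag) {x : W₁} {y : W₂} (hxy : Z x y) :
    psat χ M₁ x ↔ psat χ M₂ y := by
  induction χ generalizing W₁ W₂ x y with
  | atom p => exact hZ.val_iff hxy p
  | neg α ih => exact not_congr (ih hZ hxy)
  | and α β ihα ihβ => exact and_congr (ihα hZ hxy) (ihβ hZ hxy)
  | ck A α ih =>
    constructor
    · intro h y' hy'
      obtain ⟨x', hx', hZ'⟩ := hZ.ckRel_back hxy hy'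
      exact (ih hZ hZ').1 (h x' hx')
    · intro h x' hx'
      obtain ⟨y', hy', hZ'⟩ := hZ.ckRel_forth hxy hx'
      exact (ih hZ hZ').2 (h y' hy')
  | ann α β ihα ihβ =>
    have hZα :=
      hZ.restrict (X₁ := {u | psat α M₁ u}) (X₂ := {u | psat α M₂ u}) (ihα hZ ·)
    constructor
    · intro h hy
      have hx := (ihα hZ hxy).2 hy
      exact (ihβ hZα (x := ⟨x, hx⟩) (y := ⟨y, hy⟩) hxy).1 (h hx)
    · intro h hx
      have hy := (ihα hZ hxy).1 hx
      exact (ihβ hZα (x := ⟨x, hx⟩) (y := ⟨y, hy⟩) hxy).2 (h hy)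

end Bisim

end KModel

theorem bisim_refP_univ_restrict {W : Type} (M : KModel AP Ag W) (w : W) (X : Set W) :
    (M.refP w X Set.univ).Bisim (M.restrict X)
      (fun u u' => u = u'.1 ∧ ckRel M Set.univ w u) where
  val_iff := by
    rintro _ _ ⟨rfl, -⟩ p
    rfl
  forth := by
    rintro u u' ⟨rfl, hw⟩ a v ⟨hR, hX⟩
    exact ⟨⟨v, (hX trivial hw).1 u'.2⟩, hR, rfl, hw.tail ⟨a, trivial, hR⟩⟩
  back := by
    rintro u u' ⟨rfl, hw⟩ a v' hR
    exact ⟨v'.1, ⟨hR, fun _ _ => iff_of_true u'.2 v'.2⟩, rfl, hw.tail ⟨a, trivial, hR⟩⟩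

theorem psat_refP_univ_iff_restrict (χ : PForm AP Ag) {W : Type} (M : KModel AP Ag W)
    {X : Set W} {w : W} (hw : w ∈ X) :
    psat χ (M.refP w X Set.univ) w ↔ psat χ (M.restrict X) ⟨w, hw⟩ :=
  (bisim_refP_univ_restrict M w X).psat_iff χ ⟨rfl, .refl⟩

theorem sat_tr_iff_psat (χ : PForm AP Ag) {W : Type} (M : KModel AP Ag W) (v : W) :
    sat (tr χ) M v ↔ psat χ M v := by
  induction χ generalizing W v with
  | atom p => rfl
  | neg α ih => exact not_congr (ih M v)
  | and α β ihα ihβ => exact and_congr (ihα M v) (ihβ M v)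
  | ck A α ih => exact forall₂_congr fun u _ ↦ ih M u
  | ann α β ihα ihβ =>
    have hX : {u | sat (tr α) M u} = {u | psat α M u} := Set.ext fun u ↦ ihα M u
    simp only [tr, sat, psat, hX, ihα M v]
    exact forall_congr' fun h ↦ (ihβ _ v).trans (psat_refP_univ_iff_restrict β M h)

theorem public_is_global_to_grand_coalition_general (φ ψ : PForm AP Ag) :
    ∀ (W : Type) (M : KModel AP Ag W), (∀ a : Ag, Equivalence (M.R a)) →
      ∀ w : W,
        sat (Form.annP (tr φ) Set.univ (tr ψ)) M w ↔ psat (PForm.ann φ ψ) M w :=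
  fun _ M _ w ↦ sat_tr_iff_psat (.ann φ ψ) M w

/-- public announcement of PAL coincides with the global
announcement to the grand coalition `Ag` in GLAL. -/
theorem public_is_global_to_grand_coalition [Fintype Ag] (φ ψ : PForm AP Ag) :
    ∀ (W : Type) (M : KModel AP Ag W), (∀ a : Ag, Equivalence (M.R a)) →
      ∀ w : W,
        sat (Form.annP (tr φ) Set.univ (tr ψ)) M w ↔ psat (PForm.ann φ ψ) M w :=
  public_is_global_to_grand_coalition_general φ ψ
end

section
/- For every propositional formula φ (a GLAL formula built from atoms, negation and conjunction only, containing no C_A operators and no announcement operators) and every coalition A ⊆ Ag, the formula [φ]⁻_A E_A φ is valid: after locally and truthfully announcing φ to the agents in A, every agent in A knows φ. -/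
variable {AP Ag : Type}

/-- Propositional formulas: built from atoms, negation and conjunction only. -/
def Form.isProp : Form AP Ag → Prop
  | .atom _ => True
  | .neg φ => φ.isProp
  | .and φ ψ => φ.isProp ∧ ψ.isProp
  | _ => False

/-! Splitting the `a`-classes inside `R_a(w)` along `⟦φ⟧` keeps `R_a` an equivalence relation,
and the refined class of `w` lies inside `⟦φ⟧` once `w ⊨ φ`. Refinements keep the valuation,
and a propositional formula only sees the valuation, so `φ` still holds throughout that class. -/

variable {W : Type}

theorem Form.isProp.sat_iff_of_V_eq {φ : Form AP Ag} (hφ : φ.isProp) {M M' : KModel AP Ag W}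
    (hV : M.V = M'.V) (v : W) : sat φ M v ↔ sat φ M' v := by
  induction φ generalizing v with
  | atom p => simp only [sat, hV]
  | neg ψ ih => simp only [sat, ih hφ]
  | and ψ₁ ψ₂ ih₁ ih₂ => simp only [sat, ih₁ hφ.1, ih₂ hφ.2]
  | ck | annP | annM => exact hφ.elim

theorem ckRel_singleton_iff {M : KModel AP Ag W} {a : Ag} (ha : Equivalence (M.R a))
    {v u : W} : ckRel M {a} v u ↔ M.R a v u := by
  have hstep : (fun v u => ∃ b ∈ ({a} : Set Ag), M.R b v u) = M.R a := by
    ext v u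
    simp
  rw [ckRel, hstep]
  exact ⟨Relation.reflTransGen_le_of_equivalence_of_le ha le_rfl v u, .single⟩

theorem KModel.refM_equivalence (M : KModel AP Ag W) (w : W) (X : Set W) (A : Set Ag)
    {a : Ag} (ha : Equivalence (M.R a)) : Equivalence ((M.refM w X A).R a) where
  refl _ := ⟨ha.refl _, fun _ _ => Iff.rfl⟩
  symm := fun ⟨hvu, hsplit⟩ => ⟨ha.symm hvu, fun haA hwu =>
    (hsplit haA (ha.trans hwu (ha.symm hvu))).symm⟩
  trans := fun ⟨hvu, hsplit_v⟩ ⟨hut, hsplit_u⟩ => ⟨ha.trans hvu hut, fun haA hwv =>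
    (hsplit_v haA hwv).trans (hsplit_u haA (ha.trans hwv hvu))⟩

theorem local_announcement_everybody_knows_general
    (φ : Form AP Ag) (hφ : φ.isProp) (A : Set Ag) :
    ∀ (W : Type) (M : KModel AP Ag W), (∀ a : Ag, Equivalence (M.R a)) →
      ∀ w : W, sat φ M w →
        ∀ a ∈ A, sat (Form.ck {a} φ) (M.refM w {v | sat φ M v} A) w := by
  intro W M hEq w hw a haA v hwv
  rw [ckRel_singleton_iff (M.refM_equivalence w _ A (hEq a))] at hwv
  have hv : sat φ M v := (hwv.2 haA ((hEq a).refl w)).mp hw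
  exact (hφ.sat_iff_of_V_eq (M := M) (M' := M.refM w _ A) rfl v).mp hv

/-- for propositional `φ`, the formula `[φ]⁻_A E_A φ` is valid.
(The satisfaction of `E_A φ`, the conjunction over `a ∈ A` of `K_a φ = C_{a} φ`,
is unfolded: each conjunct `K_a φ` holds in the refined model.) -/
theorem local_announcement_everybody_knows [Fintype Ag]
    (φ : Form AP Ag) (hφ : φ.isProp) (A : Set Ag) :
    ∀ (W : Type) (M : KModel AP Ag W), (∀ a : Ag, Equivalence (M.R a)) →
      ∀ w : W, sat φ M w →
        ∀ a ∈ A, sat (Form.ck {a} φ) (M.refM w {v | sat φ M v} A) w :=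
  local_announcement_everybody_knows_general φ hφ A
end

section
/- Assume Ag contains at least two agents. Then there exist Kripke models N and N', worlds w of N and w' of N', a modal bisimulation B between N and N' with B(w,w'), and a GLAL formula φ such that (N,w) ⊨ φ and (N',w') ⊭ φ. That is, modally bisimilar pointed models may be distinguished by GLAL formulas. -/
variable {AP Ag : Type}

/-- A modal (standard) bisimulation between two Kripke models. -/
def IsModalBisim {W W' : Type} (M : KModel AP Ag W) (M' : KModel AP Ag W')
    (B : W → W' → Prop) : Prop :=
  ∀ w w', B w w' →
    (∀ p, w ∈ M.V p ↔ w' ∈ M'.V p) ∧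
    (∀ a v, M.R a w v → ∃ v', M'.R a w' v' ∧ B v v') ∧
    (∀ a v', M'.R a w' v' → ∃ v, M.R a w v ∧ B v v')

theorem KModel.mem_iff_mem_of_ckRel_refM {W : Type} {M : KModel AP Ag W} {w : W} {X : Set W}
    {A : Set Ag} (hw : ∀ a ∈ A, ∀ v, M.R a w v) {v u : W} (h : ckRel (M.refM w X A) A v u) :
    v ∈ X ↔ u ∈ X := by
  induction h with
  | refl => rfl
  | tail _ hstep ih =>
    obtain ⟨a, ha, -, hsplit⟩ := hstep
    exact ih.trans (hsplit ha (hw a ha _))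

def totalModel : KModel AP Ag Bool where
  R _ _ _ := True
  V _ := {true}

/-- The world `(i, b)` lies in block `i` and satisfies every atom iff `b`. -/
def blockModel (a₀ : Ag) : KModel AP Ag (Bool × Bool) where
  R a v u := a = a₀ ∨ v.1 = u.1
  V _ := {v | v.2 = true}

/-- `[p]⁻_Ag ¬ C_Ag p`. -/
def notCommonAfterAnnouncing (p : AP) : Form AP Ag :=
  .annM (.atom p) Set.univ (.neg (.ck Set.univ (.atom p)))

theorem equivalence_totalModel_R (a : Ag) : Equivalence ((totalModel : KModel AP Ag Bool).R a) :=
  ⟨fun _ => trivial, fun _ => trivial, fun _ _ => trivial⟩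

theorem equivalence_blockModel_R (a₀ a : Ag) :
    Equivalence ((blockModel a₀ : KModel AP Ag (Bool × Bool)).R a) where
  refl _ := .inr rfl
  symm := Or.imp_right Eq.symm
  trans
    | .inl h, _ => .inl h
    | .inr _, .inl h => .inl h
    | .inr h, .inr h' => .inr (h.trans h')

theorem isModalBisim_blockModel_totalModel (a₀ : Ag) :
    IsModalBisim (blockModel a₀ : KModel AP Ag (Bool × Bool)) totalModel
      (fun v b => v.2 = b) := by
  rintro v _ rfl
  exact ⟨fun _ => Iff.rfl, fun _ u _ => ⟨u.2, trivial, rfl⟩,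
    fun _ b _ => ⟨(v.1, b), .inr rfl, rfl⟩⟩

theorem not_sat_totalModel (p : AP) :
    ¬ sat (notCommonAfterAnnouncing p : Form AP Ag) totalModel true := by
  -- `true` sees every world, so the announcement cuts it off from all `¬p`-worlds.
  intro h
  refine h rfl fun v hv => ?_
  exact (KModel.mem_iff_mem_of_ckRel_refM (fun _ _ _ => trivial) hv).mp rfl

theorem sat_blockModel {a₀ b₀ : Ag} (hab : a₀ ≠ b₀) (p : AP) :
    sat (notCommonAfterAnnouncing p : Form AP Ag) (blockModel a₀) (false, true) := by
  -- `b₀` does not see block `true` from `(false, true)`, so there the announcement leaves its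
  -- link between `(true, true)` and `(true, false)` intact; `a₀` reaches `(true, true)`.
  intro _ hck
  have hpath : ckRel ((blockModel a₀ : KModel AP Ag _).refM (false, true)
      {v | sat (.atom p) (blockModel a₀) v} Set.univ) Set.univ (false, true) (true, false) := by
    refine .tail (b := (true, true)) (.single ⟨a₀, trivial, .inl rfl, fun _ _ => Iff.rfl⟩)
      ⟨b₀, trivial, .inr rfl, ?_⟩
    rintro - (h | h)
    exacts [absurd h.symm hab, absurd h Bool.false_ne_true]
  exact Bool.false_ne_true (hck _ hpath)

theorem glal_not_invariant_under_modal_bisimulation_general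
    [Nonempty AP] (hAg : ∃ a b : Ag, a ≠ b) :
    ∃ (W W' : Type) (M : KModel AP Ag W) (M' : KModel AP Ag W')
      (B : W → W' → Prop) (w : W) (w' : W') (φ : Form AP Ag),
      (∀ a : Ag, Equivalence (M.R a)) ∧ (∀ a : Ag, Equivalence (M'.R a)) ∧
      IsModalBisim M M' B ∧ B w w' ∧ sat φ M w ∧ ¬ sat φ M' w' := by
  obtain ⟨a₀, b₀, hab⟩ := hAg
  obtain ⟨p⟩ := ‹Nonempty AP›
  exact ⟨_, _, blockModel a₀, totalModel, fun v b => v.2 = b, (false, true), true,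
    notCommonAfterAnnouncing p, equivalence_blockModel_R a₀, equivalence_totalModel_R,
    isModalBisim_blockModel_totalModel a₀, rfl, sat_blockModel hab p, not_sat_totalModel p⟩

/-- modally bisimilar pointed models can be distinguished by GLAL. -/
theorem glal_not_invariant_under_modal_bisimulation
    [Fintype Ag] [Nonempty AP] (hAg : ∃ a b : Ag, a ≠ b) :
    ∃ (W W' : Type) (M : KModel AP Ag W) (M' : KModel AP Ag W')
      (B : W → W' → Prop) (w : W) (w' : W') (φ : Form AP Ag),
      (∀ a : Ag, Equivalence (M.R a)) ∧ (∀ a : Ag, Equivalence (M'.R a)) ∧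
      IsModalBisim M M' B ∧ B w w' ∧ sat φ M w ∧ ¬ sat φ M' w' :=
  glal_not_invariant_under_modal_bisimulation_general hAg
end

section
/- Assume Ag contains at least two agents. Then GLAL is strictly more expressive than epistemic logic with common knowledge: there exists a GLAL formula φ such that no formula ψ ∈ L_el satisfies, for every Kripke model M and world w of M, (M,w) ⊨ φ if and only if (M,w) ⊨ ψ. -/
variable {AP Ag : Type}

/-- Formulas of epistemic logic with common knowledge: no announcement operators. -/
def Form.noAnn : Form AP Ag → Prop
  | .atom _ => True
  | .neg φ => φ.noAnn
  | .and φ ψ => φ.noAnn ∧ ψ.noAnn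
  | .ck _ φ => φ.noAnn
  | .annP _ _ _ => False
  | .annM _ _ _ => False

/-! The formula `[p]⁻_a C_Ag p` separates a two-world model, in which only `a` is uncertain
about `p`, from the `2 × 2` grid in which `a` knows the row and `b` the column, although the
first projection of the grid onto the two-world model is a bounded morphism and hence preserves
every announcement-free formula. Announcing `p` locally to `a` at `(⊤, ⊤)` splits only the
`a`-class of the actual world: in the two-world model every refined relation
becomes the identity, whereas in the grid a `b`-step to `(⊤, ⊥)` followed by an unrefined `a`-step
still reaches the `¬p` world `(⊥, ⊥)`. -/

namespace KModel

variable {W W' : Type}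

structure BoundedMorphism (M : KModel AP Ag W) (N : KModel AP Ag W') where
  toFun : W → W'
  mem_V_iff : ∀ p w, toFun w ∈ N.V p ↔ w ∈ M.V p
  map_R : ∀ {a v u}, M.R a v u → N.R a (toFun v) (toFun u)
  exists_R_of_R : ∀ {a v u'}, N.R a (toFun v) u' → ∃ u, M.R a v u ∧ toFun u = u'

namespace BoundedMorphism

variable {M : KModel AP Ag W} {N : KModel AP Ag W'} (f : M.BoundedMorphism N) {A : Set Ag}

theorem ckRel_map {v u : W} (h : ckRel M A v u) : ckRel N A (f.toFun v) (f.toFun u) := by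
  induction h with
  | refl => exact .refl
  | tail _ step ih =>
    obtain ⟨a, ha, hR⟩ := step
    exact ih.tail ⟨a, ha, f.map_R hR⟩

theorem exists_ckRel_of_ckRel {v : W} {u' : W'} (h : ckRel N A (f.toFun v) u') :
    ∃ u, ckRel M A v u ∧ f.toFun u = u' := by
  induction h with
  | refl => exact ⟨v, .refl, rfl⟩
  | tail _ step ih =>
    obtain ⟨m, hm, rfl⟩ := ih
    obtain ⟨a, ha, hR⟩ := step
    obtain ⟨u, hR', rfl⟩ := f.exists_R_of_R hR
    exact ⟨u, hm.tail ⟨a, ha, hR'⟩, rfl⟩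

theorem sat_iff {ψ : Form AP Ag} (hψ : ψ.noAnn) (w : W) : sat ψ N (f.toFun w) ↔ sat ψ M w := by
  induction ψ generalizing w with
  | atom q => exact f.mem_V_iff q w
  | neg χ ih => exact not_congr (ih hψ w)
  | and χ₁ χ₂ ih₁ ih₂ => exact and_congr (ih₁ hψ.1 w) (ih₂ hψ.2 w)
  | ck A χ ih =>
    constructor
    · exact fun hN u hu => (ih hψ u).mp (hN _ (f.ckRel_map hu))
    · intro hM u' hu'
      obtain ⟨u, hu, rfl⟩ := f.exists_ckRel_of_ckRel hu'
      exact (ih hψ u).mpr (hM u hu)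
  | annP => exact hψ.elim
  | annM => exact hψ.elim

end BoundedMorphism

end KModel

def twoWorldModel (p : AP) (a : Ag) : KModel AP Ag Bool where
  R c u t := u = t ∨ c = a
  V q := {u | u = true ∧ q = p}

/-- Worlds are `(column, row)`; `p` holds in the column `true`. -/
def gridModel (p : AP) (a b : Ag) : KModel AP Ag (Bool × Bool) where
  R c u t := u = t ∨ (c = a ∧ u.2 = t.2) ∨ (c = b ∧ u.1 = t.1)
  V q := {u | u.1 = true ∧ q = p}

theorem twoWorldModel_equivalence (p : AP) (a c : Ag) : Equivalence ((twoWorldModel p a).R c) where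
  refl _ := .inl rfl
  symm := by
    rintro _ _ (rfl | h)
    exacts [.inl rfl, .inr h]
  trans := by
    rintro _ _ _ (rfl | h) h'
    exacts [h', .inr h]

theorem gridModel_equivalence (p : AP) {a b : Ag} (hab : a ≠ b) (c : Ag) :
    Equivalence ((gridModel p a b).R c) where
  refl _ := .inl rfl
  symm := by
    rintro _ _ (rfl | ⟨rfl, h⟩ | ⟨rfl, h⟩)
    exacts [.inl rfl, .inr (.inl ⟨rfl, h.symm⟩), .inr (.inr ⟨rfl, h.symm⟩)]
  trans := by
    rintro _ _ _ (rfl | ⟨rfl, h⟩ | ⟨rfl, h⟩) h'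
    · exact h'
    · rcases h' with rfl | ⟨-, h'⟩ | ⟨hba, -⟩
      exacts [.inr (.inl ⟨rfl, h⟩), .inr (.inl ⟨rfl, h.trans h'⟩), absurd hba hab]
    · rcases h' with rfl | ⟨hab', -⟩ | ⟨-, h'⟩
      exacts [.inr (.inr ⟨rfl, h⟩), absurd hab'.symm hab, .inr (.inr ⟨rfl, h.trans h'⟩)]

def gridModel.fst (p : AP) (a b : Ag) : (gridModel p a b).BoundedMorphism (twoWorldModel p a) where
  toFun := Prod.fst
  mem_V_iff _ _ := Iff.rfl
  map_R := by
    rintro _ _ _ (rfl | ⟨rfl, -⟩ | ⟨-, h⟩)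
    exacts [.inl rfl, .inr rfl, .inl h]
  exists_R_of_R := by
    rintro _ v t (h | rfl)
    exacts [⟨v, .inl rfl, h⟩, ⟨(t, v.2), .inr (.inl ⟨rfl, rfl⟩), rfl⟩]

def locallyAnnouncedCommon (p : AP) (a : Ag) : Form AP Ag :=
  .annM (.atom p) {a} (.ck Set.univ (.atom p))

theorem sat_twoWorldModel (p : AP) (a : Ag) :
    sat (locallyAnnouncedCommon p a) (twoWorldModel p a) true := by
  intro _ v hv
  suffices v = true by subst this; exact ⟨rfl, rfl⟩
  induction hv with
  | refl => rfl
  | tail _ step ih =>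
    subst ih
    obtain ⟨c, -, hR, hsplit⟩ := step
    rcases hR with h | rfl
    · exact h.symm
    · exact ((hsplit rfl (.inr rfl)).mp ⟨rfl, rfl⟩).1

theorem not_sat_gridModel (p : AP) {a b : Ag} (hab : a ≠ b) :
    ¬ sat (locallyAnnouncedCommon p a) (gridModel p a b) (true, true) := by
  intro h
  set M' := (gridModel p a b).refM (true, true) {v | sat (.atom p) (gridModel p a b) v} {a}
  have step_b : M'.R b (true, true) (true, false) :=
    ⟨.inr (.inr ⟨rfl, rfl⟩), fun hb => absurd hb.symm hab⟩
  have step_a : M'.R a (true, false) (false, false) := by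
    refine ⟨.inr (.inl ⟨rfl, rfl⟩), fun _ hR => ?_⟩
    rcases hR with h' | ⟨-, h'⟩ | ⟨h', -⟩
    exacts [absurd h' (by decide), absurd h' (by decide), absurd h' hab]
  have path : ckRel M' Set.univ (true, true) (false, false) :=
    (Relation.ReflTransGen.single ⟨b, trivial, step_b⟩).tail ⟨a, trivial, step_a⟩
  exact absurd (h ⟨rfl, rfl⟩ _ path).1 Bool.false_ne_true

theorem glal_more_expressive_than_el_general
    [Nonempty AP] (hAg : ∃ a b : Ag, a ≠ b) :
    ∃ φ : Form AP Ag, ∀ ψ : Form AP Ag, ψ.noAnn →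
      ¬ (∀ (W : Type) (M : KModel AP Ag W), (∀ a : Ag, Equivalence (M.R a)) →
           ∀ w : W, (sat φ M w ↔ sat ψ M w)) := by
  obtain ⟨a, b, hab⟩ := hAg
  let p : AP := Classical.arbitrary AP
  refine ⟨locallyAnnouncedCommon p a, fun ψ hψ hequiv => ?_⟩
  have h_two : sat ψ (twoWorldModel p a) true :=
    (hequiv _ _ (twoWorldModel_equivalence p a) true).mp (sat_twoWorldModel p a)
  have h_grid : sat ψ (gridModel p a b) (true, true) :=
    ((gridModel.fst p a b).sat_iff hψ (true, true)).mp h_two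
  exact not_sat_gridModel p hab ((hequiv _ _ (gridModel_equivalence p hab) _).mpr h_grid)

/-- GLAL is strictly more expressive than epistemic logic with
common knowledge: some GLAL formula is equivalent to no announcement-free formula. -/
theorem glal_more_expressive_than_el
    [Fintype Ag] [Nonempty AP] (hAg : ∃ a b : Ag, a ≠ b) :
    ∃ φ : Form AP Ag, ∀ ψ : Form AP Ag, ψ.noAnn →
      ¬ (∀ (W : Type) (M : KModel AP Ag W), (∀ a : Ag, Equivalence (M.R a)) →
           ∀ w : W, (sat φ M w ↔ sat ψ M w)) :=
  glal_more_expressive_than_el_general hAg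
end

section
/- Assume Ag contains at least two agents. Then GLAL is strictly more expressive than public announcement logic: there exists a GLAL formula φ such that no PAL formula ψ satisfies, for every Kripke model M and world w of M, (M,w) ⊨_GLAL φ if and only if (M,w) ⊨_PAL ψ. -/
variable {AP Ag : Type}

/-! PAL formulas are invariant under bisimulation, since restricting two bisimilar models to
the worlds satisfying a formula keeps them bisimilar. A local announcement `[p]⁻_a`, however,
splits only those `a`-cells that meet the `a`-cell of the actual world, so its effect depends on
more than the bisimulation type. Take the square with worlds `0, 1, 2, 3`, `p` true at the even
ones, `a`-cells `{0, 1}, {2, 3}` and all other cells `{1, 2}, {3, 0}`; it collapses by parity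
onto the two-world model with total relations. After `[p]⁻_a` at `0`, every `a`-cell of the
two-world model is split by `p`, so `C_b C_a (p → K_a p)` holds; in the square the cell
`{2, 3}` stays whole and `b` reaches it from `0`. -/

section Bisimulation

variable {W₁ W₂ : Type}

structure KModel.IsBisim (M₁ : KModel AP Ag W₁) (M₂ : KModel AP Ag W₂) (Z : W₁ → W₂ → Prop) :
    Prop where
  atom : ∀ p v v', Z v v' → (v ∈ M₁.V p ↔ v' ∈ M₂.V p)
  forth : ∀ c v v' u, Z v v' → M₁.R c v u → ∃ u', M₂.R c v' u' ∧ Z u u'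
  back : ∀ c v v' u', Z v v' → M₂.R c v' u' → ∃ u, M₁.R c v u ∧ Z u u'

namespace KModel.IsBisim

variable {M₁ : KModel AP Ag W₁} {M₂ : KModel AP Ag W₂} {Z : W₁ → W₂ → Prop}

theorem symm (h : M₁.IsBisim M₂ Z) : M₂.IsBisim M₁ (flip Z) where
  atom p v v' hz := (h.atom p v' v hz).symm
  forth c v v' u hz hR := h.back c v' v u hz hR
  back c v v' u' hz hR := h.forth c v' v u' hz hR

theorem ckRel_forth (h : M₁.IsBisim M₂ Z) (A : Set Ag) {v : W₁} {v' : W₂} {u : W₁} (hz : Z v v')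
    (hvu : ckRel M₁ A v u) : ∃ u', ckRel M₂ A v' u' ∧ Z u u' := by
  induction hvu with
  | refl => exact ⟨v', .refl, hz⟩
  | tail _ hstep ih =>
    obtain ⟨u₀', hv'u₀', hz₀⟩ := ih
    obtain ⟨c, hc, hR⟩ := hstep
    obtain ⟨u', hR', hz'⟩ := h.forth c _ _ _ hz₀ hR
    exact ⟨u', hv'u₀'.tail ⟨c, hc, hR'⟩, hz'⟩

theorem restrict (h : M₁.IsBisim M₂ Z) {X₁ : Set W₁} {X₂ : Set W₂}
    (hX : ∀ v v', Z v v' → (v ∈ X₁ ↔ v' ∈ X₂)) :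
    (M₁.restrict X₁).IsBisim (M₂.restrict X₂) (fun x y => Z x.1 y.1) where
  atom p x y hz := h.atom p x.1 y.1 hz
  forth c x y u hz hR := by
    obtain ⟨u', hR', hz'⟩ := h.forth c x.1 y.1 u.1 hz hR
    exact ⟨⟨u', (hX _ _ hz').1 u.2⟩, hR', hz'⟩
  back c x y u' hz hR := by
    obtain ⟨u, hR', hz'⟩ := h.back c x.1 y.1 u'.1 hz hR
    exact ⟨⟨u, (hX _ _ hz').2 u'.2⟩, hR', hz'⟩

end KModel.IsBisim

end Bisimulation

theorem KModel.IsBisim.psat_iff (ψ : PForm AP Ag) :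
    ∀ {W₁ W₂ : Type} {M₁ : KModel AP Ag W₁} {M₂ : KModel AP Ag W₂} {Z : W₁ → W₂ → Prop},
      M₁.IsBisim M₂ Z → ∀ {v v'}, Z v v' → (psat ψ M₁ v ↔ psat ψ M₂ v') := by
  induction ψ with
  | atom p => exact fun h _ _ hz => h.atom p _ _ hz
  | neg φ ih => exact fun h _ _ hz => not_congr (ih h hz)
  | and φ ψ ihφ ihψ => exact fun h _ _ hz => and_congr (ihφ h hz) (ihψ h hz)
  | ck A φ ih =>
    intro _ _ _ _ _ h v v' hz
    refine ⟨fun H u' hu' => ?_, fun H u hu => ?_⟩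
    · obtain ⟨u, hu, hz'⟩ := h.symm.ckRel_forth A hz hu'
      exact (ih h hz').1 (H u hu)
    · obtain ⟨u', hu', hz'⟩ := h.ckRel_forth A hz hu
      exact (ih h hz').2 (H u' hu')
  | ann φ ψ ihφ ihψ =>
    intro _ _ _ _ _ h v v' hz
    have hres := h.restrict (X₁ := {x | psat φ _ x}) (X₂ := {y | psat φ _ y})
      fun _ _ hz => ihφ h hz
    exact ⟨fun H h₂ => (ihψ hres (v := ⟨v, (ihφ h hz).2 h₂⟩) (v' := ⟨v', h₂⟩) hz).1 (H _),
      fun H h₁ => (ihψ hres (v := ⟨v, h₁⟩) (v' := ⟨v', (ihφ h hz).1 h₁⟩) hz).2 (H _)⟩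

section Refinement

variable {W : Type}

theorem ckRel_of_R {M : KModel AP Ag W} {A : Set Ag} {c : Ag} (hc : c ∈ A) {v u : W}
    (h : M.R c v u) : ckRel M A v u :=
  .single ⟨c, hc, h⟩

theorem mem_of_ckRel {M : KModel AP Ag W} {A : Set Ag} {S : Set W}
    (hS : ∀ c ∈ A, ∀ x y, M.R c x y → x ∈ S → y ∈ S) {v u : W} (h : ckRel M A v u)
    (hv : v ∈ S) : u ∈ S := by
  induction h with
  | refl => exact hv
  | tail _ hstep ih =>
    obtain ⟨c, hc, hR⟩ := hstep
    exact hS c hc _ _ hR ih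

theorem KModel.refM_R_iff_of_R {M : KModel AP Ag W} {w : W} {X : Set W} {A : Set Ag} {c : Ag}
    (hc : c ∈ A) {v u : W} (hwv : M.R c w v) :
    (M.refM w X A).R c v u ↔ M.R c v u ∧ (v ∈ X ↔ u ∈ X) :=
  and_congr_right' ⟨fun h => h hc hwv, fun h _ _ => h⟩

theorem KModel.refM_R_iff_of_not_mem {M : KModel AP Ag W} {w : W} {X : Set W} {A : Set Ag}
    {c : Ag} (hc : c ∉ A) {v u : W} : (M.refM w X A).R c v u ↔ M.R c v u :=
  and_iff_left fun h => absurd h hc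

theorem KModel.refM_R_iff_of_not_R {M : KModel AP Ag W} {w : W} {X : Set W} {A : Set Ag}
    {c : Ag} {v u : W} (hwv : ¬ M.R c w v) : (M.refM w X A).R c v u ↔ M.R c v u :=
  and_iff_left fun _ h => absurd h hwv

end Refinement

def partitionModel {W κ : Type} (cell : Ag → W → κ) (S : Set W) : KModel AP Ag W where
  R c x y := cell c x = cell c y
  V _ := S

theorem partitionModel_equivalence {W κ : Type} (cell : Ag → W → κ) (S : Set W) (c : Ag) :
    Equivalence ((partitionModel (AP := AP) cell S).R c) :=
  (Setoid.ker (cell c)).iseqv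

-- Addition in `Fin 4` wraps around, so the cells of agents other than `a` are `{1, 2}, {3, 0}`.
open Classical in
noncomputable def square (a : Ag) : KModel AP Ag (Fin 4) :=
  partitionModel (fun c x => if c = a then x / 2 else (x + 1) / 2) {x | x.val % 2 = 0}

def pair : KModel AP Ag (Fin 2) :=
  partitionModel (fun _ _ => ()) {0}

theorem square_isBisim_pair (a : Ag) :
    (square (AP := AP) a).IsBisim pair (fun x y => x.val % 2 = y.val) where
  atom _ x y hz := by
    simp only [square, pair, partitionModel, Set.mem_ofPred_eq, Set.mem_singleton_iff, Fin.ext_iff]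
    omega
  forth _ _ _ u _ _ := ⟨⟨u.val % 2, by omega⟩, rfl, rfl⟩
  back c x _ t _ _ := by
    by_cases hc : c = a <;> simp only [square, partitionModel, hc, if_true, if_false]
    · exact (by decide : ∀ (x : Fin 4) (t : Fin 2),
        ∃ u : Fin 4, x / 2 = u / 2 ∧ u.val % 2 = t.val) x t
    · exact (by decide : ∀ (x : Fin 4) (t : Fin 2),
        ∃ u : Fin 4, (x + 1) / 2 = (u + 1) / 2 ∧ u.val % 2 = t.val) x t

def localWitness (a b : Ag) (p : AP) : Form AP Ag :=
  .annM (.atom p) {a} (.ck {b} (.ck {a} ((Form.atom p).impl (.ck {a} (.atom p)))))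

theorem sat_localWitness_pair (a b : Ag) (p : AP) : sat (localWitness a b p) pair (0 : Fin 2) := by
  intro _ v _ u _
  simp only [Form.impl, sat, not_and, not_not]
  intro hp u' hu'
  refine mem_of_ckRel (fun c hc x y hR => ?_) hu' hp
  obtain rfl := Set.mem_singleton_iff.1 hc
  exact ((KModel.refM_R_iff_of_R (Set.mem_singleton c) rfl).1 hR).2.1

theorem not_sat_localWitness_square {a b : Ag} (hab : a ≠ b) (p : AP) :
    ¬ sat (localWitness a b p) (square a) (0 : Fin 4) := by
  have hb : b ∉ ({a} : Set Ag) := fun h => hab h.symm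
  have hb03 : (square (AP := AP) a).R b 0 3 := by simp [square, partitionModel, hab.symm]
  have ha32 : (square (AP := AP) a).R a 3 2 := by simp [square, partitionModel]
  have ha23 : (square (AP := AP) a).R a 2 3 := by simp [square, partitionModel]
  have ha03 : ¬ (square (AP := AP) a).R a 0 3 := by simp [square, partitionModel]
  have ha02 : ¬ (square (AP := AP) a).R a 0 2 := by simp [square, partitionModel]
  intro H
  have H3 := H (show (0 : Fin 4).val % 2 = 0 from rfl) 3 <|
    ckRel_of_R (Set.mem_singleton _) <| (KModel.refM_R_iff_of_not_mem hb).2 hb03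
  have H2 := H3 2 <| ckRel_of_R (Set.mem_singleton _) <| (KModel.refM_R_iff_of_not_R ha03).2 ha32
  refine H2 ⟨show (2 : Fin 4).val % 2 = 0 from rfl, fun hK => ?_⟩
  have : (3 : Fin 4).val % 2 = 0 := hK 3 <| ckRel_of_R (Set.mem_singleton _) <|
    (KModel.refM_R_iff_of_not_R ha02).2 ha23
  exact absurd this (by decide)

theorem glal_more_expressive_than_pal_general
    [Nonempty AP] (hAg : ∃ a b : Ag, a ≠ b) :
    ∃ φ : Form AP Ag, ∀ ψ : PForm AP Ag,
      ¬ (∀ (W : Type) (M : KModel AP Ag W), (∀ a : Ag, Equivalence (M.R a)) →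
           ∀ w : W, (sat φ M w ↔ psat ψ M w)) := by
  obtain ⟨a, b, hab⟩ := hAg
  obtain ⟨p⟩ := ‹Nonempty AP›
  refine ⟨localWitness a b p, fun ψ hψ => not_sat_localWitness_square hab p ?_⟩
  have h_pair := (hψ _ pair (partitionModel_equivalence _ _) 0).1 (sat_localWitness_pair a b p)
  have h_square := ((square_isBisim_pair a).psat_iff ψ (v := 0) (v' := 0) rfl).2 h_pair
  exact (hψ _ (square a) (partitionModel_equivalence _ _) 0).2 h_square

/-- GLAL is strictly more expressive than PAL:
some GLAL formula is equivalent to no PAL formula. -/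
theorem glal_more_expressive_than_pal
    [Fintype Ag] [Nonempty AP] (hAg : ∃ a b : Ag, a ≠ b) :
    ∃ φ : Form AP Ag, ∀ ψ : PForm AP Ag,
      ¬ (∀ (W : Type) (M : KModel AP Ag W), (∀ a : Ag, Equivalence (M.R a)) →
           ∀ w : W, (sat φ M w ↔ psat ψ M w)) :=
  glal_more_expressive_than_pal_general hAg
end

section
/- If pointed Kripke models (M,s) and (M',s') are ±-bisimilar, then for every GLAL formula ψ, (M,s) ⊨ ψ if and only if (M',s') ⊨ ψ. That is, ±-bisimilarity preserves modal equivalence in GLAL. -/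
variable {AP Ag : Type}

/-- `R_A(w,v)`: `R_a(w,v)` holds for exactly the agents `a ∈ A`. -/
def RA {W : Type} (M : KModel AP Ag W) (A : Set Ag) (w v : W) : Prop :=
  ∀ a : Ag, M.R a w v ↔ a ∈ A

/-- A ±-simulation between two Kripke models: Atoms, Forth and Reach. -/
def IsPMSim {W W' : Type} (M : KModel AP Ag W) (M' : KModel AP Ag W')
    (S : W → W' → Prop) : Prop :=
  ∀ w w', S w w' →
    (∀ p, w ∈ M.V p ↔ w' ∈ M'.V p) ∧
    (∀ (A : Set Ag) (v : W), RA M A w v → ∃ v', RA M' A w' v' ∧ S v v') ∧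
    (∀ v v', S v v' → ∀ a, M.R a w v ↔ M'.R a w' v')

/-- A ±-bisimulation: both it and its converse are ±-simulations. -/
def IsPMBisim {W W' : Type} (M : KModel AP Ag W) (M' : KModel AP Ag W')
    (B : W → W' → Prop) : Prop :=
  IsPMSim M M' B ∧ IsPMSim M' M (fun w' w => B w w')

/-!
Induction on the formula, for all pairs of models at once. By Forth and Reach a ±-bisimulation
transfers `R^C_A`-reachability in both directions, which settles common knowledge. Both
refinements split, for the agents in `A`, the classes meeting a test set (`R_a(w)`, resp.
`R^C_A(w)`) along the truth set of the announced formula. The bisimulation respects the truth set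
by induction and the test set by Reach, resp. by the reachability transfer, so it is still a
±-bisimulation between the refined models, which are again equivalence models.
-/

def KModel.refine {W : Type} (M : KModel AP Ag W) (X : Set W) (A : Set Ag) (T : Ag → Set W) :
    KModel AP Ag W where
  R a v u := M.R a v u ∧ (a ∈ A → v ∈ T a → (v ∈ X ↔ u ∈ X))
  V := M.V

theorem KModel.refM_eq_refine {W : Type} (M : KModel AP Ag W) (w : W) (X : Set W) (A : Set Ag) :
    M.refM w X A = M.refine X A (fun a => {v | M.R a w v}) := rfl

theorem KModel.refP_eq_refine {W : Type} (M : KModel AP Ag W) (w : W) (X : Set W) (A : Set Ag) :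
    M.refP w X A = M.refine X A (fun _ => {v | ckRel M A w v}) := rfl

theorem KModel.equivalence_refine {W : Type} {M : KModel AP Ag W}
    (hM : ∀ a, Equivalence (M.R a)) (X : Set W) {A : Set Ag} {T : Ag → Set W}
    (hT : ∀ a ∈ A, ∀ v u, M.R a v u → v ∈ T a → u ∈ T a) (a : Ag) :
    Equivalence ((M.refine X A T).R a) where
  refl v := ⟨(hM a).refl v, fun _ _ => Iff.rfl⟩
  symm := fun ⟨h, g⟩ =>
    ⟨(hM a).symm h, fun ha hu => (g ha (hT a ha _ _ ((hM a).symm h) hu)).symm⟩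
  trans := fun ⟨h₁, g₁⟩ ⟨h₂, g₂⟩ =>
    ⟨(hM a).trans h₁ h₂, fun ha hv => (g₁ ha hv).trans (g₂ ha (hT a ha _ _ h₁ hv))⟩

section Simulation

variable {W W' : Type} {M : KModel AP Ag W} {M' : KModel AP Ag W'} {B : W → W' → Prop}
  {w v : W} {w' v' : W'}

theorem IsPMSim.atoms (hB : IsPMSim M M' B) (hw : B w w') (p : AP) :
    w ∈ M.V p ↔ w' ∈ M'.V p :=
  (hB w w' hw).1 p

theorem IsPMSim.forth (hB : IsPMSim M M' B) (hw : B w w') (v : W) :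
    ∃ v', B v v' ∧ ∀ a, M.R a w v ↔ M'.R a w' v' := by
  obtain ⟨v', hR, hv⟩ := (hB w w' hw).2.1 {a | M.R a w v} v fun _ => Iff.rfl
  exact ⟨v', hv, fun a => (hR a).symm⟩

theorem IsPMSim.reach (hB : IsPMSim M M' B) (hw : B w w') (hv : B v v') (a : Ag) :
    M.R a w v ↔ M'.R a w' v' :=
  (hB w w' hw).2.2 v v' hv a

theorem IsPMBisim.symm (hB : IsPMBisim M M' B) : IsPMBisim M' M (fun w' w => B w w') :=
  ⟨hB.2, hB.1⟩

theorem IsPMSim.exists_ckRel (hB : IsPMSim M M' B) {A : Set Ag} (hw : B w w')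
    (h : ckRel M A w v) : ∃ v', B v v' ∧ ckRel M' A w' v' := by
  induction h with
  | refl => exact ⟨w', hw, .refl⟩
  | tail _ hstep ih =>
    obtain ⟨u', hu, hck⟩ := ih
    obtain ⟨a, ha, hR⟩ := hstep
    obtain ⟨v', hv, hR'⟩ := hB.forth hu _
    exact ⟨v', hv, hck.tail ⟨a, ha, (hR' a).mp hR⟩⟩

/-- Walking the chain back from `v` by Forth (using symmetry) ends at some `u'` with `B w u'`;
Reach at `(w, w')` and reflexivity of `R_a` then give `R'_a w' u'` for any `a ∈ A`. -/
theorem IsPMSim.ckRel_of_ckRel (hB : IsPMSim M M' B) (hM : ∀ a, Equivalence (M.R a))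
    (hM' : ∀ a, Equivalence (M'.R a)) {A : Set Ag} {a : Ag} (ha : a ∈ A) (hw : B w w')
    (h : ckRel M A w v) (hv : B v v') : ckRel M' A w' v' := by
  induction h generalizing v' with
  | refl => exact .single ⟨a, ha, (hB.reach hw hv a).mp ((hM a).refl w)⟩
  | tail _ hstep ih =>
    obtain ⟨b, hb, hR⟩ := hstep
    obtain ⟨u', hu, hR'⟩ := hB.forth hv _
    exact (ih hu).tail ⟨b, hb, (hM' b).symm ((hR' b).mp ((hM b).symm hR))⟩

theorem IsPMBisim.ckRel_iff (hB : IsPMBisim M M' B) (hM : ∀ a, Equivalence (M.R a))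
    (hM' : ∀ a, Equivalence (M'.R a)) {A : Set Ag} {a : Ag} (ha : a ∈ A) (hw : B w w')
    (hv : B v v') : ckRel M A w v ↔ ckRel M' A w' v' :=
  ⟨fun h => hB.1.ckRel_of_ckRel hM hM' ha hw h hv,
    fun h => hB.2.ckRel_of_ckRel hM' hM ha hw h hv⟩

end Simulation

section Refinement

variable {W W' : Type} {M : KModel AP Ag W} {M' : KModel AP Ag W'} {B : W → W' → Prop}
  {X : Set W} {X' : Set W'} {A : Set Ag} {T : Ag → Set W} {T' : Ag → Set W'}

theorem refine_rel_iff (hX : ∀ v v', B v v' → (v ∈ X ↔ v' ∈ X'))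
    (hT : ∀ a ∈ A, ∀ v v', B v v' → (v ∈ T a ↔ v' ∈ T' a)) {v u : W} {v' u' : W'}
    (hv : B v v') (hu : B u u') (hR : ∀ a, M.R a v u ↔ M'.R a v' u') (a : Ag) :
    (M.refine X A T).R a v u ↔ (M'.refine X' A T').R a v' u' :=
  and_congr (hR a) <| imp_congr_right fun ha =>
    imp_congr (hT a ha v v' hv) (iff_congr (hX v v' hv) (hX u u' hu))

theorem IsPMSim.refine (hB : IsPMSim M M' B) (hX : ∀ v v', B v v' → (v ∈ X ↔ v' ∈ X'))
    (hT : ∀ a ∈ A, ∀ v v', B v v' → (v ∈ T a ↔ v' ∈ T' a)) :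
    IsPMSim (M.refine X A T) (M'.refine X' A T') B := by
  intro v v' hv
  refine ⟨hB.atoms hv, fun A₀ u hu => ?_,
    fun u u' hu => refine_rel_iff hX hT hv hu (hB.reach hv hu)⟩
  obtain ⟨u', hu', hR⟩ := hB.forth hv u
  exact ⟨u', fun a => (refine_rel_iff hX hT hv hu' hR a).symm.trans (hu a), hu'⟩

theorem IsPMBisim.refine (hB : IsPMBisim M M' B) (hX : ∀ v v', B v v' → (v ∈ X ↔ v' ∈ X'))
    (hT : ∀ a ∈ A, ∀ v v', B v v' → (v ∈ T a ↔ v' ∈ T' a)) :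
    IsPMBisim (M.refine X A T) (M'.refine X' A T') B :=
  ⟨hB.1.refine hX hT,
    hB.2.refine (fun v' v h => (hX v v' h).symm) fun a ha v' v h => (hT a ha v v' h).symm⟩

end Refinement

theorem IsPMBisim.sat_iff (ψ : Form AP Ag) {W W' : Type} {M : KModel AP Ag W}
    {M' : KModel AP Ag W'} {B : W → W' → Prop} (hM : ∀ a, Equivalence (M.R a))
    (hM' : ∀ a, Equivalence (M'.R a)) (hB : IsPMBisim M M' B) {w : W} {w' : W'}
    (hw : B w w') : sat ψ M w ↔ sat ψ M' w' := by
  induction ψ generalizing W W' with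
  | atom p => exact hB.1.atoms hw p
  | neg φ ih => exact not_congr (ih hM hM' hB hw)
  | and φ ψ ih₁ ih₂ => exact and_congr (ih₁ hM hM' hB hw) (ih₂ hM hM' hB hw)
  | ck A φ ih =>
    refine ⟨fun h v' hv' => ?_, fun h v hv => ?_⟩
    · obtain ⟨v, hvv', hv⟩ := hB.2.exists_ckRel hw hv'
      exact (ih hM hM' hB hvv').mp (h v hv)
    · obtain ⟨v', hvv', hv'⟩ := hB.1.exists_ckRel hw hv
      exact (ih hM hM' hB hvv').mpr (h v' hv')
  | annP φ A ψ ihφ ihψ =>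
    have hX : ∀ v v', B v v' → (sat φ M v ↔ sat φ M' v') := fun _ _ h => ihφ hM hM' hB h
    have hT : ∀ a ∈ A, ∀ v v', B v v' → (ckRel M A w v ↔ ckRel M' A w' v') :=
      fun _ ha _ _ h => hB.ckRel_iff hM hM' ha hw h
    have hclosed {W : Type} (M : KModel AP Ag W) (w : W) :
        ∀ a ∈ A, ∀ v u, M.R a v u → ckRel M A w v → ckRel M A w u :=
      fun a ha _ _ h hv => hv.tail ⟨a, ha, h⟩
    rw [sat, sat, KModel.refP_eq_refine, KModel.refP_eq_refine]
    exact imp_congr (ihφ hM hM' hB hw) <| ihψ (KModel.equivalence_refine hM _ (hclosed M w))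
      (KModel.equivalence_refine hM' _ (hclosed M' w')) (hB.refine hX hT) hw
  | annM φ A ψ ihφ ihψ =>
    have hX : ∀ v v', B v v' → (sat φ M v ↔ sat φ M' v') := fun _ _ h => ihφ hM hM' hB h
    have hT : ∀ a ∈ A, ∀ v v', B v v' → (M.R a w v ↔ M'.R a w' v') :=
      fun a _ _ _ h => hB.1.reach hw h a
    rw [sat, sat, KModel.refM_eq_refine, KModel.refM_eq_refine]
    exact imp_congr (ihφ hM hM' hB hw) <|
      ihψ (KModel.equivalence_refine hM _ fun a _ _ _ h hv => (hM a).trans hv h)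
        (KModel.equivalence_refine hM' _ fun a _ _ _ h hv => (hM' a).trans hv h)
        (hB.refine hX hT) hw

theorem pm_bisim_preserves_glal_general {W W' : Type}
    (M : KModel AP Ag W) (M' : KModel AP Ag W')
    (hM : ∀ a : Ag, Equivalence (M.R a)) (hM' : ∀ a : Ag, Equivalence (M'.R a))
    (s : W) (s' : W') (h : ∃ B : W → W' → Prop, IsPMBisim M M' B ∧ B s s') :
    ∀ ψ : Form AP Ag, sat ψ M s ↔ sat ψ M' s' := by
  obtain ⟨B, hB, hs⟩ := h
  exact fun ψ => hB.sat_iff ψ hM hM' hs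

/-- ±-bisimilar pointed models satisfy the same GLAL formulas. -/
theorem pm_bisim_preserves_glal {W W' : Type} [Fintype Ag]
    (M : KModel AP Ag W) (M' : KModel AP Ag W')
    (hM : ∀ a : Ag, Equivalence (M.R a)) (hM' : ∀ a : Ag, Equivalence (M'.R a))
    (s : W) (s' : W') (h : ∃ B : W → W' → Prop, IsPMBisim M M' B ∧ B s s') :
    ∀ ψ : Form AP Ag, sat ψ M s ↔ sat ψ M' s' :=
  pm_bisim_preserves_glal_general M M' hM hM' s s' h
end

section
/- Assume Ag contains at least two agents. Then epistemic logic with distributed knowledge is not as expressive as GLAL: there exists a GLAL formula φ such that no formula ψ of the language L_eld (epistemic logic with common knowledge and distributed knowledge) satisfies, for every Kripke model M and world w of M, (M,w) ⊨ φ if and only if (M,w) ⊨ ψ. -/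
variable {AP Ag : Type}

/-- Formulas of epistemic logic with common knowledge and distributed knowledge. -/
inductive FormD (AP Ag : Type) : Type
  | atom : AP → FormD AP Ag
  | neg  : FormD AP Ag → FormD AP Ag
  | and  : FormD AP Ag → FormD AP Ag → FormD AP Ag
  | ck   : Set Ag → FormD AP Ag → FormD AP Ag
  | dk   : Set Ag → FormD AP Ag → FormD AP Ag

/-- Satisfaction for epistemic logic with common and distributed knowledge. -/
def satD {W : Type} : FormD AP Ag → KModel AP Ag W → W → Prop
  | .atom p, M, w => w ∈ M.V p
  | .neg φ, M, w => ¬ satD φ M w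
  | .and φ ψ, M, w => satD φ M w ∧ satD ψ M w
  | .ck A φ, M, w => ∀ v, ckRel M A w v → satD φ M v
  | .dk A φ, M, w => ∀ v, (∀ a ∈ A, M.R a w v) → satD φ M v

/-!
In the cycle of length `n`, agent `a` links the worlds `2k, 2k+1`, agent `b` links `2k+1, 2k+2`,
other agents distinguish all worlds, and every atom holds at the even worlds. Reduction modulo `4`
maps the `8`-cycle onto the `4`-cycle and lifts steps not only of each relation but of every
intersection of relations, so no formula with common and distributed knowledge tells world `0` of
the two cycles apart. Announcing `p` locally to `a` at `0` cuts the `a`-link between `0` and `1`,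
turning `1` into a world where `a` knows `¬p`. In the `4`-cycle it is reached from `0` by the path
`0 →b 3 →a 2 →b 1`, in the `8`-cycle it is seven steps away, so
`[p]⁻_a ◇_b ◇_a ◇_b (¬p ∧ K_a ¬p)` holds at `0` in the former and fails in the latter.
-/

namespace KModel

variable {W W' β : Type}

def ofLabels (κ : Ag → W → β) (V : AP → Set W) : KModel AP Ag W :=
  ⟨fun c v u => κ c v = κ c u, V⟩

theorem ofLabels_equivalence (κ : Ag → W → β) (V : AP → Set W) (c : Ag) :
    Equivalence ((ofLabels κ V).R c) :=
  ⟨fun _ => rfl, Eq.symm, Eq.trans⟩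

theorem refM_equivalence_s19 (M : KModel AP Ag W) (w : W) (X : Set W) (A : Set Ag) {c : Ag}
    (h : Equivalence (M.R c)) : Equivalence ((M.refM w X A).R c) where
  refl v := ⟨h.refl v, fun _ _ => Iff.rfl⟩
  symm := fun ⟨hvu, hX⟩ => ⟨h.symm hvu, fun hc hwu => (hX hc (h.trans hwu (h.symm hvu))).symm⟩
  trans := fun ⟨hvu, hX⟩ ⟨hut, hX'⟩ =>
    ⟨h.trans hvu hut, fun hc hwv => (hX hc hwv).trans (hX' hc (h.trans hwv hvu))⟩

/-- A bounded morphism that also lifts steps of the intersection relations `⋂_{c ∈ A} R_c`,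
as distributed knowledge requires. -/
structure IsDistBoundedMorphism (M : KModel AP Ag W) (M' : KModel AP Ag W') (f : W → W') :
    Prop where
  mem_V_iff : ∀ p w, f w ∈ M'.V p ↔ w ∈ M.V p
  rel_map : ∀ c w v, M.R c w v → M'.R c (f w) (f v)
  exists_lift : ∀ (A : Set Ag) w u, (∀ c ∈ A, M'.R c (f w) u) →
    ∃ v, (∀ c ∈ A, M.R c w v) ∧ f v = u

namespace IsDistBoundedMorphism

variable {M : KModel AP Ag W} {M' : KModel AP Ag W'} {f : W → W'}

theorem ckRel_map (hf : M.IsDistBoundedMorphism M' f) {A : Set Ag} {w v : W}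
    (h : ckRel M A w v) : ckRel M' A (f w) (f v) :=
  h.lift f fun _ _ ⟨c, hc, hR⟩ => ⟨c, hc, hf.rel_map c _ _ hR⟩

theorem exists_ckRel_lift (hf : M.IsDistBoundedMorphism M' f) {A : Set Ag} {w : W} {u : W'}
    (h : ckRel M' A (f w) u) : ∃ v, ckRel M A w v ∧ f v = u := by
  induction h with
  | refl => exact ⟨w, .refl, rfl⟩
  | tail _ hstep ih =>
    obtain ⟨v, hwv, rfl⟩ := ih
    obtain ⟨c, hc, hR⟩ := hstep
    obtain ⟨v', hvv', rfl⟩ := hf.exists_lift {c} v _ (by simpa using hR)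
    exact ⟨v', hwv.tail ⟨c, hc, hvv' c rfl⟩, rfl⟩

theorem satD_iff (hf : M.IsDistBoundedMorphism M' f) (ψ : FormD AP Ag) (w : W) :
    satD ψ M' (f w) ↔ satD ψ M w := by
  induction ψ generalizing w with
  | atom p => exact hf.mem_V_iff p w
  | neg φ ih => exact not_congr (ih w)
  | and φ χ ihφ ihχ => exact and_congr (ihφ w) (ihχ w)
  | ck A φ ih =>
    refine ⟨fun h v hwv => (ih v).1 (h _ (hf.ckRel_map hwv)), fun h u hwu => ?_⟩
    obtain ⟨v, hwv, rfl⟩ := hf.exists_ckRel_lift hwu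
    exact (ih v).2 (h v hwv)
  | dk A φ ih =>
    refine ⟨fun h v hwv => (ih v).1 (h _ fun c hc => hf.rel_map c _ _ (hwv c hc)),
      fun h u hwu => ?_⟩
    obtain ⟨v, hwv, rfl⟩ := hf.exists_lift A w u hwu
    exact (ih v).2 (h v hwv)

end IsDistBoundedMorphism

end KModel

def Form.diamond (c : Ag) (φ : Form AP Ag) : Form AP Ag := .neg (.ck {c} (.neg φ))

/-- `[p]⁻_a ◇_b ◇_a ◇_b (¬p ∧ K_a ¬p)` -/
def separatingFormula (a b : Ag) (p : AP) : Form AP Ag :=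
  .annM (.atom p) {a}
    (.diamond b (.diamond a (.diamond b (.and (.neg (.atom p)) (.ck {a} (.neg (.atom p)))))))

section Satisfaction

variable {W : Type} {M : KModel AP Ag W} {c : Ag}

theorem ckRel_singleton_iff_s19 (h : Equivalence (M.R c)) {w v : W} :
    ckRel M {c} w v ↔ M.R c w v := by
  have hunion : (fun v u => ∃ a ∈ ({c} : Set Ag), M.R a v u) = M.R c := by simp
  have : Std.Refl (M.R c) := ⟨h.refl⟩
  have : IsTrans W (M.R c) := ⟨fun _ _ _ => h.trans⟩
  rw [ckRel, hunion, Relation.reflTransGen_eq_self]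

theorem sat_knows_iff (h : Equivalence (M.R c)) {φ : Form AP Ag} {w : W} :
    sat (.ck {c} φ) M w ↔ ∀ v, M.R c w v → sat φ M v := by
  simp only [sat, ckRel_singleton_iff_s19 h]

theorem sat_diamond_iff (h : Equivalence (M.R c)) {φ : Form AP Ag} {w : W} :
    sat (.diamond c φ) M w ↔ ∃ v, M.R c w v ∧ sat φ M v := by
  rw [Form.diamond, sat, sat_knows_iff h]
  simp [sat]

end Satisfaction

section Cycle

variable {a b : Ag}

noncomputable def cycleLabel (a b : Ag) (n : ℕ) (c : Ag) (v : Fin n) : ℕ :=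
  open Classical in
  if c = a then v / 2 else if c = b then (v + 1) % n / 2 else v

noncomputable def cycleModel (a b : Ag) (n : ℕ) : KModel AP Ag (Fin n) :=
  .ofLabels (cycleLabel a b n) fun _ => {v | v.val % 2 = 0}

theorem cycleLabel_left (n : ℕ) (v : Fin n) : cycleLabel a b n a v = v / 2 := by
  simp [cycleLabel]

theorem cycleLabel_right (hab : a ≠ b) (n : ℕ) (v : Fin n) :
    cycleLabel a b n b v = (v + 1) % n / 2 := by
  simp [cycleLabel, hab.symm]

def foldCycle (v : Fin 8) : Fin 4 := ⟨v % 4, Nat.mod_lt _ (by norm_num)⟩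

theorem cycleLabel_foldCycle_eq_of_eq (c : Ag) {w v : Fin 8}
    (h : cycleLabel a b 8 c w = cycleLabel a b 8 c v) :
    cycleLabel a b 4 c (foldCycle w) = cycleLabel a b 4 c (foldCycle v) := by
  have := w.isLt
  have := v.isLt
  unfold cycleLabel foldCycle at *
  split_ifs at * <;> simp only at * <;> omega

/-- One lift `v` of `u` serves all agents at once: for the `a`- and `b`-steps it stays in the
block of `w`, and when `u` is the image of `w` it is `w` itself. -/
theorem exists_foldCycle_lift (w : Fin 8) (u : Fin 4) : ∃ v : Fin 8, foldCycle v = u ∧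
    ((foldCycle w).val / 2 = u.val / 2 → w.val / 2 = v.val / 2) ∧
    (((foldCycle w).val + 1) % 4 / 2 = (u.val + 1) % 4 / 2 →
      (w.val + 1) % 8 / 2 = (v.val + 1) % 8 / 2) ∧
    (foldCycle w = u → v = w) := by
  revert w u
  decide

theorem foldCycle_isDistBoundedMorphism :
    (cycleModel a b 8 : KModel AP Ag _).IsDistBoundedMorphism (cycleModel a b 4) foldCycle where
  mem_V_iff _ w := by simp [cycleModel, KModel.ofLabels, foldCycle, Nat.mod_mod_of_dvd]
  rel_map := cycleLabel_foldCycle_eq_of_eq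
  exists_lift A w u h := by
    obtain ⟨v, rfl, hblock_a, hblock_b, hself⟩ := exists_foldCycle_lift w u
    refine ⟨v, fun c hc => ?_, rfl⟩
    have hc := h c hc
    simp only [cycleModel, KModel.ofLabels, cycleLabel] at hc ⊢
    split_ifs at hc ⊢ with hca hcb
    · exact hblock_a hc
    · exact hblock_b hc
    · rw [hself (Fin.ext hc)]

end Cycle

section AnnouncedCycle

variable {a b : Ag} {n : ℕ}

noncomputable def announcedCycle (a b : Ag) (p : AP) (n : ℕ) [NeZero n] : KModel AP Ag (Fin n) :=
  (cycleModel a b n).refM 0 {v | sat (.atom p) (cycleModel a b n) v} {a}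

variable [NeZero n]

theorem announcedCycle_rel_left_iff (p : AP) {v u : Fin n} :
    (announcedCycle a b p n).R a v u ↔
      v.val / 2 = u.val / 2 ∧ (v.val / 2 = 0 → (v.val % 2 = 0 ↔ u.val % 2 = 0)) := by
  simp [announcedCycle, KModel.refM, cycleModel, KModel.ofLabels, cycleLabel_left, sat, eq_comm]

theorem announcedCycle_rel_right_iff (hab : a ≠ b) (p : AP) {v u : Fin n} :
    (announcedCycle a b p n).R b v u ↔ (v.val + 1) % n / 2 = (u.val + 1) % n / 2 := by
  simp [announcedCycle, KModel.refM, cycleModel, KModel.ofLabels, cycleLabel_right hab, hab.symm]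

theorem announcedCycle_equivalence (p : AP) (c : Ag) :
    Equivalence ((announcedCycle a b p n).R c) :=
  KModel.refM_equivalence_s19 _ _ _ _ (KModel.ofLabels_equivalence _ _ c)

theorem sat_separatingFormula_cycle_iff (hab : a ≠ b) (p : AP) :
    sat (separatingFormula a b p) (cycleModel a b n : KModel AP Ag _) 0 ↔
      ∃ v₁ : Fin n, 1 % n / 2 = (v₁.val + 1) % n / 2 ∧
      ∃ v₂ : Fin n, (v₁.val / 2 = v₂.val / 2 ∧
        (v₁.val / 2 = 0 → (v₁.val % 2 = 0 ↔ v₂.val % 2 = 0))) ∧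
      ∃ v₃ : Fin n, (v₂.val + 1) % n / 2 = (v₃.val + 1) % n / 2 ∧ v₃.val % 2 ≠ 0 ∧
      ∀ v₄ : Fin n, v₃.val / 2 = v₄.val / 2 ∧
        (v₃.val / 2 = 0 → (v₃.val % 2 = 0 ↔ v₄.val % 2 = 0)) → v₄.val % 2 ≠ 0 := by
  have hp : sat (.atom p) (cycleModel a b n : KModel AP Ag _) 0 := by
    simp [sat, cycleModel, KModel.ofLabels]
  change (_ → sat _ (announcedCycle a b p n) 0) ↔ _
  simp only [sat_diamond_iff (announcedCycle_equivalence p _), sat.eq_3,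
    sat_knows_iff (announcedCycle_equivalence p _)]
  simp only [announcedCycle_rel_left_iff, announcedCycle_rel_right_iff hab, sat, Fin.val_zero,
    zero_add]
  exact ⟨fun h => h hp, fun h _ => h⟩

theorem sat_separatingFormula_cycle_four (hab : a ≠ b) (p : AP) :
    sat (separatingFormula a b p) (cycleModel a b 4 : KModel AP Ag _) 0 := by
  rw [sat_separatingFormula_cycle_iff hab]
  decide

theorem not_sat_separatingFormula_cycle_eight (hab : a ≠ b) (p : AP) :
    ¬ sat (separatingFormula a b p) (cycleModel a b 8 : KModel AP Ag _) 0 := by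
  rw [sat_separatingFormula_cycle_iff hab]
  decide

end AnnouncedCycle

theorem glal_more_expressive_than_eld_general
    [Nonempty AP] (hAg : ∃ a b : Ag, a ≠ b) :
    ∃ φ : Form AP Ag, ∀ ψ : FormD AP Ag,
      ¬ (∀ (W : Type) (M : KModel AP Ag W), (∀ a : Ag, Equivalence (M.R a)) →
           ∀ w : W, (sat φ M w ↔ satD ψ M w)) := by
  obtain ⟨a, b, hab⟩ := hAg
  obtain ⟨p⟩ := ‹Nonempty AP›
  refine ⟨separatingFormula a b p, fun ψ hψ => ?_⟩
  have h₄ : satD ψ (cycleModel a b 4) 0 :=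
    (hψ _ _ (KModel.ofLabels_equivalence _ _) 0).1 (sat_separatingFormula_cycle_four hab p)
  have h₈ : satD ψ (cycleModel a b 8) 0 := (foldCycle_isDistBoundedMorphism.satD_iff ψ 0).1 h₄
  exact not_sat_separatingFormula_cycle_eight hab p
    ((hψ _ _ (KModel.ofLabels_equivalence _ _) 0).2 h₈)

/-- epistemic logic with common and distributed knowledge is not
as expressive as GLAL: some GLAL formula is equivalent to no `L_eld` formula. -/
theorem glal_more_expressive_than_eld
    [Fintype Ag] [Nonempty AP] (hAg : ∃ a b : Ag, a ≠ b) :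
    ∃ φ : Form AP Ag, ∀ ψ : FormD AP Ag,
      ¬ (∀ (W : Type) (M : KModel AP Ag W), (∀ a : Ag, Equivalence (M.R a)) →
           ∀ w : W, (sat φ M w ↔ satD ψ M w)) :=
  glal_more_expressive_than_eld_general hAg
end
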